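/- Let G be the 9×9 complex matrix defined in equation (2) of the paper. Then G†G = (1/9)H₀ + (1/3)I₉, where H₀ is the matrix of equation (9). In particular, G†G is a dd-matrix and (G†G)_B = I₃. -/
import Mathlib


noncomputable section

open Matrix Kronecker

/-- The sum of the three diagonal 3×3 blocks of a 9×9 matrix. -/
def blockB (M : Matrix (Fin 3 × Fin 3) (Fin 3 × Fin 3) ℂ) : Matrix (Fin 3) (Fin 3) ℂ :=
  Matrix.of fun a b => ∑ i : Fin 3, M (i, a) (i, b)

/-- The 3×3 matrix of traces of the 3×3 blocks of a 9×9 matrix. -/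
def blockA (M : Matrix (Fin 3 × Fin 3) (Fin 3 × Fin 3) ℂ) : Matrix (Fin 3) (Fin 3) ℂ :=
  Matrix.of fun i j => ∑ a : Fin 3, M (i, a) (j, a)

/-- A 9×9 matrix is a dd-matrix if all three diagonal 3×3 blocks are diagonal. -/
def IsDD (M : Matrix (Fin 3 × Fin 3) (Fin 3 × Fin 3) ℂ) : Prop :=
  ∀ i a b : Fin 3, a ≠ b → M (i, a) (i, b) = 0

/-- The matrix `H₀` of equation (9), as a 9×9 matrix. -/
def H9 : Matrix (Fin 9) (Fin 9) ℂ :=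
  !![1, 0,  0, 0,  0,           0,           0, 0, 0;
     0, 0,  0, 0,  0, Complex.I,              2, 0, 0;
     0, 0, -1, 0,  0,           0,           0, 0, 0;
     0, 0,  0, 0,  0,           0,           0, 0, 0;
     0, 0,  0, 0, -1,           0,           0, 0, 0;
     0, -Complex.I, 0, 0, 0,    1,           1, 0, 0;
     0, 2,  0, 0,  0,           1,          -1, 0, 0;
     0, 0,  0, 0,  0,           0,           0, 1, 0;
     0, 0,  0, 0,  0,           0,           0, 0, 0]

/-- `H₀` viewed as a bipartite (3×3-block) matrix, index `(i, a)` corresponding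
to row `3i + a`. -/
def H₀ : Matrix (Fin 3 × Fin 3) (Fin 3 × Fin 3) ℂ :=
  Matrix.of fun p q => H9 (finProdFinEquiv p) (finProdFinEquiv q)

/-- The matrix `G` of equation (2), as a 9×9 matrix. -/
def G9 : Matrix (Fin 9) (Fin 9) ℂ :=
  !![2/3, 0, 0, 0, 0, 0, 0, 0, 0;
     0, 1/(Real.sqrt 3 : ℂ), 0, 0, 0, Complex.I/(3*(Real.sqrt 3 : ℂ)),
       2/(3*(Real.sqrt 3 : ℂ)), 0, 0;
     0, 0, (Real.sqrt 2 : ℂ)/3, 0, 0, 0, 0, 0, 0;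
     0, 0, 0, 1/(Real.sqrt 3 : ℂ), 0, 0, 0, 0, 0;
     0, 0, 0, 0, (Real.sqrt 2 : ℂ)/3, 0, 0, 0, 0;
     0, 0, 0, 0, 0, (Real.sqrt 11 : ℂ)/(3*(Real.sqrt 3 : ℂ)),
       (3 + 2*Complex.I)/(3*(Real.sqrt 33 : ℂ)), 0, 0;
     0, 0, 0, 0, 0, 0, 1/(Real.sqrt 33 : ℂ), 0, 0;
     0, 0, 0, 0, 0, 0, 0, 2/3, 0;
     0, 0, 0, 0, 0, 0, 0, 0, 1/(Real.sqrt 3 : ℂ)]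

/-- `G` viewed as a bipartite (3×3-block) matrix. -/
def G : Matrix (Fin 3 × Fin 3) (Fin 3 × Fin 3) ℂ :=
  Matrix.of fun p q => G9 (finProdFinEquiv p) (finProdFinEquiv q)


set_option maxHeartbeats 4000000 in
lemma key9 : G9ᴴ * G9 = (9 : ℂ)⁻¹ • H9 + (3 : ℂ)⁻¹ • 1 := by
  have h2p : (Real.sqrt 2 : ℂ) ^ 2 = 2 := by
    rw [← Complex.ofReal_pow, Real.sq_sqrt (by norm_num)]; norm_num
  have h3p : (Real.sqrt 3 : ℂ) ^ 2 = 3 := by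
    rw [← Complex.ofReal_pow, Real.sq_sqrt (by norm_num)]; norm_num
  have h11p : (Real.sqrt 11 : ℂ) ^ 2 = 11 := by
    rw [← Complex.ofReal_pow, Real.sq_sqrt (by norm_num)]; norm_num
  have h33 : (Real.sqrt 33 : ℂ) = (Real.sqrt 3 : ℂ) * (Real.sqrt 11 : ℂ) := by
    rw [← Complex.ofReal_mul, show (33:ℝ) = 3 * 11 by norm_num, Real.sqrt_mul (by norm_num)]
  have hinv3 : ((Real.sqrt 3 : ℝ) : ℂ)⁻¹ = (Real.sqrt 3 : ℂ) / 3 := by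
    rw [eq_div_iff (by norm_num), inv_mul_eq_div, div_eq_iff, ← sq, h3p]
    intro h; rw [h] at h3p; simp at h3p
  have hinv11 : ((Real.sqrt 11 : ℝ) : ℂ)⁻¹ = (Real.sqrt 11 : ℂ) / 11 := by
    rw [eq_div_iff (by norm_num), inv_mul_eq_div, div_eq_iff, ← sq, h11p]
    intro h; rw [h] at h11p; simp at h11p
  ext i j
  fin_cases i <;> fin_cases j <;>
  · simp only [Matrix.mul_apply, Fin.sum_univ_succ, Fin.sum_univ_zero, G9, H9,
      Matrix.conjTranspose_apply, Matrix.cons_val', Matrix.cons_val_zero, Matrix.cons_val_one,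
      Matrix.head_cons, Matrix.head_fin_const, Matrix.cons_val_fin_one, Matrix.empty_val',
      Matrix.cons_val_succ, Matrix.cons_val_succ', Matrix.cons_val_zero', Matrix.of_apply,
      Matrix.add_apply, Matrix.smul_apply, Matrix.one_apply, h33, div_eq_mul_inv, mul_inv,
      hinv3, hinv11, Complex.star_def, _root_.map_mul, map_inv₀, map_div₀, map_ofNat,
      Complex.conj_ofReal, Complex.conj_I, map_add, _root_.map_one, smul_eq_mul,
      Fin.mk.injEq, Fin.ext_iff]
    norm_num
    try ring_nf
    try simp only [h2p, h3p, h11p, Complex.I_sq]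
    try ring_nf
    try norm_num

lemma c9_0 {α : Type*} (x0 x1 x2 x3 x4 x5 x6 x7 x8 : α) :
    ![x0,x1,x2,x3,x4,x5,x6,x7,x8] (0:Fin 9) = x0 := rfl
lemma c9_1 {α : Type*} (x0 x1 x2 x3 x4 x5 x6 x7 x8 : α) :
    ![x0,x1,x2,x3,x4,x5,x6,x7,x8] (1:Fin 9) = x1 := rfl
lemma c9_2 {α : Type*} (x0 x1 x2 x3 x4 x5 x6 x7 x8 : α) :
    ![x0,x1,x2,x3,x4,x5,x6,x7,x8] (2:Fin 9) = x2 := rfl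
lemma c9_3 {α : Type*} (x0 x1 x2 x3 x4 x5 x6 x7 x8 : α) :
    ![x0,x1,x2,x3,x4,x5,x6,x7,x8] (3:Fin 9) = x3 := rfl
lemma c9_4 {α : Type*} (x0 x1 x2 x3 x4 x5 x6 x7 x8 : α) :
    ![x0,x1,x2,x3,x4,x5,x6,x7,x8] (4:Fin 9) = x4 := rfl
lemma c9_5 {α : Type*} (x0 x1 x2 x3 x4 x5 x6 x7 x8 : α) :
    ![x0,x1,x2,x3,x4,x5,x6,x7,x8] (5:Fin 9) = x5 := rfl
lemma c9_6 {α : Type*} (x0 x1 x2 x3 x4 x5 x6 x7 x8 : α) :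
    ![x0,x1,x2,x3,x4,x5,x6,x7,x8] (6:Fin 9) = x6 := rfl
lemma c9_7 {α : Type*} (x0 x1 x2 x3 x4 x5 x6 x7 x8 : α) :
    ![x0,x1,x2,x3,x4,x5,x6,x7,x8] (7:Fin 9) = x7 := rfl
lemma c9_8 {α : Type*} (x0 x1 x2 x3 x4 x5 x6 x7 x8 : α) :
    ![x0,x1,x2,x3,x4,x5,x6,x7,x8] (8:Fin 9) = x8 := rfl

lemma keyG : Gᴴ * G = (9 : ℂ)⁻¹ • H₀ + (3 : ℂ)⁻¹ • (1 : Matrix (Fin 3 × Fin 3) (Fin 3 × Fin 3) ℂ) := by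
  ext p q
  have hmul : (Gᴴ * G) p q = (G9ᴴ * G9) (finProdFinEquiv p) (finProdFinEquiv q) := by
    simp only [Matrix.mul_apply, Matrix.conjTranspose_apply, G, Matrix.of_apply]
    exact Equiv.sum_comp (finProdFinEquiv (m := 3) (n := 3))
      (fun k => star (G9 k (finProdFinEquiv p)) * G9 k (finProdFinEquiv q))
  rw [hmul, key9]
  simp only [Matrix.add_apply, Matrix.smul_apply, H₀, Matrix.of_apply, Matrix.one_apply,
    Equiv.apply_eq_iff_eq]

lemma H0dd : ∀ i a b : Fin 3, a ≠ b → H₀ (i, a) (i, b) = 0 := by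
  intro i a b hab
  fin_cases i <;> fin_cases a <;> fin_cases b <;> first
    | rfl
    | simp_all

lemma H0sum (a b : Fin 3) : ∑ i : Fin 3, H₀ (i, a) (i, b) = 0 := by
  fin_cases a <;> fin_cases b <;>
  · rw [Fin.sum_univ_three]
    norm_num [show ∀ x y, H₀ x y = H9 (finProdFinEquiv x) (finProdFinEquiv y) from fun _ _ => rfl,
      H9, finProdFinEquiv, Matrix.vecHead, Matrix.vecTail]

theorem stmt9 :
    Gᴴ * G = (9 : ℂ)⁻¹ • H₀ + (3 : ℂ)⁻¹ • (1 : Matrix (Fin 3 × Fin 3) (Fin 3 × Fin 3) ℂ) ∧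
    IsDD (Gᴴ * G) ∧ blockB (Gᴴ * G) = 1 := by
  refine ⟨keyG, ?_, ?_⟩
  · intro i a b hab
    rw [keyG]
    simp only [Matrix.add_apply, Matrix.smul_apply, Matrix.one_apply, smul_eq_mul]
    rw [H0dd i a b hab, if_neg (by simp [hab])]
    ring
  · ext a b
    simp only [blockB, Matrix.of_apply, keyG, Matrix.add_apply, Matrix.smul_apply, smul_eq_mul]
    rw [Finset.sum_add_distrib, ← Finset.mul_sum, H0sum, mul_zero, zero_add, ← Finset.mul_sum]
    simp only [Matrix.one_apply, Prod.mk.injEq, true_and]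
    by_cases h : a = b <;> simp [h, Fin.sum_univ_three]
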